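/- Let Z = X₁ × ⋯ × X_r be a product of proper geodesic CAT(−1) spaces and Γ < Isom(Z) a non-elementary transverse subgroup. Then for every (ξ,u) ∈ H = ∂Z × ℝ^r with ξ ∉ Λ(Γ), the orbit Γ·(ξ,u) is closed in H. -/

import Mathlib

/-!
Core definitions: proper geodesic CAT(−1) spaces, geodesic segments,
nearest-point projections, horofunction (= Gromov) boundary.
-/

noncomputable section

open Real Set Metric Filter Topology
open scoped ENNReal NNReal

/-- Inverse hyperbolic cosine. -/
def arcosh (x : ℝ) : ℝ := Real.log (x + Real.sqrt (x ^ 2 - 1))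

/-- Cosine of the angle, at the common vertex, of the ℍ²-comparison triangle whose two
sides adjacent to this vertex have lengths `a`, `b` and whose opposite side has length `c`
(hyperbolic law of cosines). -/
def cmpCos (a b c : ℝ) : ℝ :=
  (Real.cosh a * Real.cosh b - Real.cosh c) / (Real.sinh a * Real.sinh b)

/-- The distance, in the ℍ²-comparison triangle with side lengths `a`, `b` adjacent to the
common vertex and opposite side length `c`, between the comparison points at arclength
parameters `s` (on the side of length `a`) and `t` (on the side of length `b`). -/
def cmpDist (a b c s t : ℝ) : ℝ :=
  _root_.arcosh (Real.cosh s * Real.cosh t - Real.sinh s * Real.sinh t * cmpCos a b c)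

/-- A choice of geodesics in a metric space: `geo x y` is an arclength parametrization on
`[0, dist x y]` of a geodesic from `x` to `y`.  A metric space admitting such a structure
is a geodesic space. -/
structure GeodesicStructure (X : Type*) [MetricSpace X] where
  geo : X → X → ℝ → X
  geo_zero : ∀ x y, geo x y 0 = x
  geo_end : ∀ x y, geo x y (dist x y) = y
  geo_isom : ∀ x y, ∀ s ∈ Set.Icc (0 : ℝ) (dist x y), ∀ t ∈ Set.Icc (0 : ℝ) (dist x y),
    dist (geo x y s) (geo x y t) = |s - t|

/-- The geodesic segment `[x, y]`. -/
def GeodesicStructure.seg {X : Type*} [MetricSpace X] (G : GeodesicStructure X) (x y : X) :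
    Set X :=
  G.geo x y '' Set.Icc 0 (dist x y)

/-- The CAT(−1) comparison property: every geodesic triangle is at least as thin as its
comparison triangle in the hyperbolic plane ℍ². -/
def GeodesicStructure.IsCATNegOne {X : Type*} [MetricSpace X] (G : GeodesicStructure X) :
    Prop :=
  ∀ x y z : X, ∀ s ∈ Set.Icc (0 : ℝ) (dist x y), ∀ t ∈ Set.Icc (0 : ℝ) (dist x z),
    dist (G.geo x y s) (G.geo x z t) ≤ cmpDist (dist x y) (dist x z) (dist y z) s t

/-- `p` is a nearest point to `x` in the set `s` (a nearest-point projection of `x`). -/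
def IsNearestPt {X : Type*} [MetricSpace X] (s : Set X) (x p : X) : Prop :=
  p ∈ s ∧ ∀ q ∈ s, dist x p ≤ dist x q

/-- A (possibly noncompact) geodesic subset of `X`: the isometric image of an interval. -/
def IsGeodesicSet {X : Type*} [MetricSpace X] (γ : Set X) : Prop :=
  ∃ (I : Set ℝ) (f : ℝ → X), I.OrdConnected ∧
    (∀ s ∈ I, ∀ t ∈ I, dist (f s) (f t) = |s - t|) ∧ γ = f '' I

/-- A bi-infinite geodesic parametrized by arclength. -/
def IsGeodesicLine {X : Type*} [MetricSpace X] (γ : ℝ → X) : Prop :=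
  ∀ s t : ℝ, dist (γ s) (γ t) = |s - t|

/-- The set of nearest-point projections to `γ` of points of `S`. -/
def projSet {X : Type*} [MetricSpace X] (γ : Set X) (S : Set X) : Set X :=
  {p | ∃ w ∈ S, IsNearestPt γ w p}

/-- The horofunction embedding `z ↦ d(·, z) − d(x₀, z)` based at `x₀`. -/
def horoemb {X : Type*} [MetricSpace X] (x0 : X) (z : X) : X → ℝ :=
  fun x => dist x z - dist x0 z

/-- The horofunction boundary of `X` (based at `x₀`), which for a proper geodesic
CAT(−1) space coincides with the Gromov boundary `∂X`:  the set of limits, in the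
topology of pointwise convergence, of functions `d(·, zₙ) − d(x₀, zₙ)` with `zₙ → ∞`. -/
def horoBdry {X : Type*} [MetricSpace X] (x0 : X) : Set (X → ℝ) :=
  closure (Set.range (horoemb x0)) \ Set.range (horoemb x0)

/-- `(w, [x,y])` is `K`-aligned: the nearest-point projection of `w` to `[x,y]` is at
distance less than `K` from `x`. -/
def AlignedLeft {X : Type*} [MetricSpace X] (G : GeodesicStructure X) (w x y : X)
    (K : ℝ) : Prop :=
  ∃ p, IsNearestPt (G.seg x y) w p ∧ dist p x < K

/-- `([x,y], z)` is `K`-aligned, i.e. `(z, [y,x])` is `K`-aligned. -/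
def AlignedRight {X : Type*} [MetricSpace X] (G : GeodesicStructure X) (x y z : X)
    (K : ℝ) : Prop :=
  ∃ q, IsNearestPt (G.seg x y) z q ∧ dist q y < K

/-- `(w, [x,y], z)` is `K`-aligned. -/
def AlignedTriple {X : Type*} [MetricSpace X] (G : GeodesicStructure X) (w x y z : X)
    (K : ℝ) : Prop :=
  AlignedLeft G w x y K ∧ AlignedRight G x y z K


/-! ## Products of CAT(−1) spaces, boundary action, transverse subgroups -/

/-- The natural map on 1-Lipschitz functions induced by an isometry `g`:
`f ↦ f ∘ g⁻¹ − f(g⁻¹ x₀)`, i.e. the renormalized action on horofunctions. -/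
def horoMap {Y : Type*} [MetricSpace Y] (x0 : Y) (g : Y ≃ᵢ Y) (f : Y → ℝ) : Y → ℝ :=
  fun x => f (g.symm x) - f (g.symm x0)

theorem horoMap_horoemb {Y : Type*} [MetricSpace Y] (x0 : Y) (g : Y ≃ᵢ Y) (z : Y) :
    horoMap x0 g (horoemb x0 z) = horoemb x0 (g z) := by
  funext x
  simp only [horoMap, horoemb]
  have h1 : dist (g.symm x) z = dist x (g z) := by
    conv_rhs => rw [← g.apply_symm_apply x]
    rw [g.dist_eq]
  have h2 : dist (g.symm x0) z = dist x0 (g z) := by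
    conv_rhs => rw [← g.apply_symm_apply x0]
    rw [g.dist_eq]
  rw [h1, h2]
  ring

theorem horoMap_continuous {Y : Type*} [MetricSpace Y] (x0 : Y) (g : Y ≃ᵢ Y) :
    Continuous (horoMap x0 g) := by
  apply continuous_pi
  intro x
  exact (continuous_apply (g.symm x)).sub (continuous_apply (g.symm x0))

/-- Isometries preserve the horofunction boundary. -/
theorem horoMap_mem_bdry {Y : Type*} [MetricSpace Y] (x0 : Y) (g : Y ≃ᵢ Y)
    {f : Y → ℝ} (hf : f ∈ horoBdry x0) : horoMap x0 g f ∈ horoBdry x0 := by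
  obtain ⟨hf1, hf2⟩ := hf
  constructor
  · have h2 : horoMap x0 g '' closure (Set.range (horoemb x0)) ⊆
        closure (horoMap x0 g '' Set.range (horoemb x0)) :=
      image_closure_subset_closure_image (horoMap_continuous x0 g)
    have h3 : horoMap x0 g '' Set.range (horoemb x0) ⊆ Set.range (horoemb x0) := by
      rintro _ ⟨_, ⟨w, rfl⟩, rfl⟩
      exact ⟨g w, (horoMap_horoemb x0 g w).symm⟩
    exact closure_mono h3 (h2 ⟨f, hf1, rfl⟩)
  · intro hmem
    obtain ⟨w, hw⟩ := hmem
    apply hf2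
    have hfx0 : f x0 = 0 := by
      have hcl : IsClosed {u : Y → ℝ | u x0 = 0} :=
        isClosed_eq (continuous_apply x0) continuous_const
      have hsub : Set.range (horoemb x0) ⊆ {u : Y → ℝ | u x0 = 0} := by
        rintro _ ⟨v, rfl⟩
        simp [horoemb]
      exact closure_minimal hsub hcl hf1
    refine ⟨g.symm w, ?_⟩
    have hkey : horoMap x0 g.symm (horoemb x0 w) = horoemb x0 (g.symm w) :=
      horoMap_horoemb x0 g.symm w
    rw [← hkey, hw]
    funext x
    simp only [horoMap, IsometryEquiv.symm_symm]
    rw [g.symm_apply_apply, g.symm_apply_apply, hfx0]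
    ring

section Product

variable {r : ℕ} {X : Fin r → Type*} [∀ i, MetricSpace (X i)]

/-- The componentwise action of `Isom(Z) = ∏ᵢ Isom(Xᵢ)` on `Z = ∏ᵢ Xᵢ`. -/
def apZ (g : ∀ i, X i ≃ᵢ X i) (z : ∀ i, X i) : ∀ i, X i := fun i => (g i) (z i)

variable (z0 : ∀ i, X i)

/-- The boundary `∂Z = ∏ᵢ ∂Xᵢ` of the product, using the horofunction model
(based at `z0`) of the Gromov boundary of each CAT(−1) factor. -/
abbrev BdryZ := ∀ i, {f : X i → ℝ // f ∈ horoBdry (z0 i)}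

/-- The action of `Isom(Z)` on `∂Z`, componentwise. -/
def bact (g : ∀ i, X i ≃ᵢ X i) (ξ : BdryZ z0) : BdryZ z0 :=
  fun i => ⟨horoMap (z0 i) (g i) ↑(ξ i), horoMap_mem_bdry (z0 i) (g i) (ξ i).2⟩

/-- The limit set `Λ(Γ) ⊂ ∂Z` of a subgroup `Γ ≤ Isom(Z)`: the set of accumulation
points of a `Γ`-orbit in `Z` under componentwise convergence to the boundary. -/
def limitSet (Γ : Subgroup (∀ i, X i ≃ᵢ X i)) : Set (BdryZ z0) :=
  {ξ | ∃ u : ℕ → Γ, ∀ i,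
    Filter.Tendsto (fun n => horoemb (z0 i) (((u n : ∀ i, X i ≃ᵢ X i)) i (z0 i)))
      Filter.atTop (nhds ↑(ξ i))}

/-- A discrete subgroup `Γ ≤ Isom(Z)` is **transverse** if it acts properly on `Z`,
every infinite sequence in `Γ` diverges in each factor (divergence), and any two
distinct points of the limit set differ in every component (antipodality). -/
def IsTransverse (Γ : Subgroup (∀ i, X i ≃ᵢ X i)) : Prop :=
  (∀ (z : ∀ i, X i) (c : ℝ),
      {g : Γ | ∀ i, dist ((g : ∀ i, X i ≃ᵢ X i) i (z i)) (z i) ≤ c}.Finite) ∧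
  (∀ u : ℕ → Γ, Function.Injective u → ∀ (z : ∀ i, X i) (i : Fin r),
      Filter.Tendsto (fun n => dist (((u n : ∀ i, X i ≃ᵢ X i)) i (z i)) (z i))
        Filter.atTop Filter.atTop) ∧
  (∀ ξ ζ, ξ ∈ limitSet z0 Γ → ζ ∈ limitSet z0 Γ → ξ ≠ ζ → ∀ i, ξ i ≠ ζ i)

/-- `Γ` is non-elementary: its limit set has at least three points. -/
def IsNonElementary (Γ : Subgroup (∀ i, X i ≃ᵢ X i)) : Prop :=
  ∃ ξ ζ η, ξ ∈ limitSet z0 Γ ∧ ζ ∈ limitSet z0 Γ ∧ η ∈ limitSet z0 Γ ∧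
    ξ ≠ ζ ∧ ξ ≠ η ∧ ζ ≠ η

/-- The conical (radial) limit set `Λ_c(Γ) ⊂ ∂Z`: points approached by an orbit within
uniformly bounded distance of geodesic rays in every factor simultaneously;
equivalently (via shadows), `β_ξ(z₀, gₙ z₀) ≥ d(z₀, gₙ z₀) − K` in every factor. -/
def conicalLimitSet (Γ : Subgroup (∀ i, X i ≃ᵢ X i)) : Set (BdryZ z0) :=
  {ξ | ξ ∈ limitSet z0 Γ ∧ ∃ K : ℝ, ∃ u : ℕ → Γ, Function.Injective u ∧ ∀ n i,
    dist (z0 i) (((u n : ∀ i, X i ≃ᵢ X i)) i (z0 i)) - K ≤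
      (↑(ξ i) : X i → ℝ) (z0 i) - (↑(ξ i) : X i → ℝ) (((u n : ∀ i, X i ≃ᵢ X i)) i (z0 i))}

/-- `g` is a loxodromic isometry with translation length `τ > 0`: it translates some
geodesic line (its axis) by `τ`. -/
def IsLoxodromicWith {Y : Type*} [MetricSpace Y] (g : Y ≃ᵢ Y) (τ : ℝ) : Prop :=
  0 < τ ∧ ∃ γ : ℝ → Y, IsGeodesicLine γ ∧ ∀ t, g (γ t) = γ (t + τ)

/-- A parabolic isometry of a CAT(−1) space: no fixed point in `X` and a unique fixed
point on the boundary `∂X`. -/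
def IsParabolicIso {Y : Type*} [MetricSpace Y] (x0 : Y) (g : Y ≃ᵢ Y) : Prop :=
  (∀ x : Y, g x ≠ x) ∧ ∃! f : Y → ℝ, f ∈ horoBdry x0 ∧ horoMap x0 g f = f

/-- `g ∈ Isom(Z)` is loxodromic with translation length vector `τ ∈ ℝʳ` if each
component is loxodromic with translation length `τᵢ`. -/
def IsLoxVector (g : ∀ i, X i ≃ᵢ X i) (τ : Fin r → ℝ) : Prop :=
  ∀ i, IsLoxodromicWith (g i) (τ i)

/-- The vector-valued length spectrum `Spec(Γ) ⊂ ℝʳ`. -/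
def lengthSpectrum (Γ : Subgroup (∀ i, X i ≃ᵢ X i)) : Set (Fin r → ℝ) :=
  {τ | ∃ g ∈ Γ, IsLoxVector g τ}

/-- `Spec(Γ)` is non-arithmetic: it generates a dense additive subgroup of `ℝʳ`. -/
def HasNonArithmeticSpectrum (Γ : Subgroup (∀ i, X i ≃ᵢ X i)) : Prop :=
  Dense ((AddSubgroup.closure (lengthSpectrum Γ) : AddSubgroup (Fin r → ℝ)) :
    Set (Fin r → ℝ))

/-- The horospherical foliation `H = ∂Z × ℝʳ`. -/
abbrev HorFol := BdryZ z0 × (Fin r → ℝ)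

/-- The `Isom(Z)`-action on `H = ∂Z × ℝʳ`:
`g · (ξ, u) = (g ξ, u + β_ξ(g⁻¹ z₀, z₀))`, where `β` is the vector-valued Busemann
cocycle `β_ξ(z, z')ᵢ = ξᵢ(zᵢ) − ξᵢ(z'ᵢ)`. -/
def HAct (g : ∀ i, X i ≃ᵢ X i) (p : HorFol z0) : HorFol z0 :=
  (bact z0 g p.1,
    fun i => p.2 i +
      ((↑(p.1 i) : X i → ℝ) ((g i).symm (z0 i)) - (↑(p.1 i) : X i → ℝ) (z0 i)))

/-- Translation `T_a : (ξ, u) ↦ (ξ, u + a)` on `H`. -/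
def Ttrans (a : Fin r → ℝ) (p : HorFol z0) : HorFol z0 := (p.1, p.2 + a)

instance horoBdryMeasurableSpace {Y : Type*} [MetricSpace Y] (x0 : Y) :
    MeasurableSpace {f : Y → ℝ // f ∈ horoBdry x0} := borel _

open MeasureTheory in
/-- `μ` is invariant under the `Γ`-action on `H`. -/
def InvariantUnder (Γ : Subgroup (∀ i, X i ≃ᵢ X i)) (μ : Measure (HorFol z0)) : Prop :=
  ∀ g ∈ Γ, ∀ E : Set (HorFol z0), MeasurableSet E → μ (HAct z0 g ⁻¹' E) = μ E

open MeasureTheory in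
/-- The `Γ`-action on `(H, μ)` is ergodic: every `Γ`-invariant Borel set is null or
conull. -/
def ErgodicUnder (Γ : Subgroup (∀ i, X i ≃ᵢ X i)) (μ : Measure (HorFol z0)) : Prop :=
  ∀ E : Set (HorFol z0), MeasurableSet E → (∀ g ∈ Γ, HAct z0 g ⁻¹' E = E) →
    μ E = 0 ∨ μ Eᶜ = 0

open MeasureTheory in
/-- `μ` is a Radon measure: a Borel measure finite on compact sets (on the second
countable locally compact space `H` this is the usual notion). -/
def IsRadon {α : Type*} [TopologicalSpace α] [MeasurableSpace α] (μ : Measure α) : Prop :=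
  ∀ Kc : Set α, IsCompact Kc → μ Kc ≠ ⊤

/-- The Poincaré series `P_{Γ,ψ}(s) = Σ_{g ∈ Γ} e^{−s ψ(κ(z₀, g z₀))}`, where
`κ(z,z') ∈ ℝʳ` is the vector of component distances. -/
def poincareSeries (Γ : Subgroup (∀ i, X i ≃ᵢ X i)) (ψ : (Fin r → ℝ) →ₗ[ℝ] ℝ)
    (s : ℝ) : ℝ≥0∞ :=
  ∑' g : Γ, ENNReal.ofReal
    (Real.exp (-(s * ψ (fun i => dist (z0 i) (((g : ∀ i, X i ≃ᵢ X i)) i (z0 i))))))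

/-- The critical exponent `δ_ψ(Γ)`. -/
def critExponent (Γ : Subgroup (∀ i, X i ≃ᵢ X i)) (ψ : (Fin r → ℝ) →ₗ[ℝ] ℝ) : ℝ :=
  sInf {s : ℝ | 0 < s ∧ poincareSeries z0 Γ ψ s ≠ ⊤}

/-- `Γ` is of `ψ`-divergence type: `δ_ψ(Γ) < ∞` and the Poincaré series diverges at
`δ_ψ(Γ)`. -/
def IsDivergenceType (Γ : Subgroup (∀ i, X i ≃ᵢ X i)) (ψ : (Fin r → ℝ) →ₗ[ℝ] ℝ) : Prop :=
  {s : ℝ | 0 < s ∧ poincareSeries z0 Γ ψ s ≠ ⊤}.Nonempty ∧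
  poincareSeries z0 Γ ψ (critExponent z0 Γ ψ) = ⊤

open MeasureTheory in
/-- A `δ`-dimensional `ψ`-conformal density of `Γ`: a `Γ`-equivariant family
`{ν_z}_{z ∈ Z}` of Borel measures on `Λ(Γ) ⊂ ∂Z` with
`dν_z/dν_w(ξ) = e^{−δ·ψ(β_ξ(z,w))}` and `ν_{z₀}(∂Z) = 1`. -/
structure ConformalDensity (Γ : Subgroup (∀ i, X i ≃ᵢ X i)) (δ : ℝ)
    (ψ : (Fin r → ℝ) →ₗ[ℝ] ℝ) where
  nu : (∀ i, X i) → Measure (BdryZ z0)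
  equivariant : ∀ g ∈ Γ, ∀ z, (nu z).map (bact z0 g) = nu (apZ g z)
  conformal : ∀ z w, nu z = (nu w).withDensity fun ξ =>
    ENNReal.ofReal (Real.exp (-(δ * ψ (fun i =>
      (↑(ξ i) : X i → ℝ) (z i) - (↑(ξ i) : X i → ℝ) (w i)))))
  normalized : nu z0 Set.univ = 1
  onLimitSet : nu z0 (limitSet z0 Γ)ᶜ = 0

open MeasureTheory in
/-- The measure `dμ(ξ, u) = e^{δ·ψ(u)} dν(ξ) du` on `H = ∂Z × ℝʳ`. -/
def muH (ν : Measure (BdryZ z0)) (δ : ℝ) (ψ : (Fin r → ℝ) →ₗ[ℝ] ℝ) :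
    Measure (HorFol z0) :=
  (ν.prod volume).withDensity fun p => ENNReal.ofReal (Real.exp (δ * ψ p.2))

end Product

/-!
If `gₙ · (ξ, u)` accumulates in `H`, the `ℝʳ`-coordinates `ξᵢ(gₙ⁻¹ z₀)` stay bounded above, so
the points `gₙ⁻¹ z₀`, which diverge in every factor by transversality, stay in a horoball
centred at `ξᵢ`. In a CAT(−1) space geodesics fellow-travel exponentially closely, which forces
a sequence going to infinity inside a horoball to converge to its centre. Infinitely many
distinct such `gₙ` would therefore put `ξ` in `Λ(Γ)`; so only finitely many orbit points lie
near any point of `H`, and the orbit is closed.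
-/

lemma arcosh_eq_real_arcosh : _root_.arcosh = Real.arcosh := rfl

lemma exp_div_four_le_sinh {t : ℝ} (ht : 1 ≤ t) : exp t / 4 ≤ sinh t := by
  have h2 : 2 ≤ exp t := by linarith [add_one_le_exp t]
  have hinv : exp (-t) * exp t = 1 := by rw [← exp_add, neg_add_cancel, exp_zero]
  rw [sinh_eq]
  nlinarith [exp_pos (-t)]

lemma sinh_le_exp_div_two (t : ℝ) : sinh t ≤ exp t / 2 := by
  rw [sinh_eq]
  linarith [exp_pos (-t)]

lemma cmpDist_self_eq {a b c s : ℝ} (ha : sinh a ≠ 0) (hb : sinh b ≠ 0) :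
    cmpDist a b c s s =
      Real.arcosh (1 + sinh s ^ 2 * (cosh c - cosh (a - b)) / (sinh a * sinh b)) := by
  rw [cmpDist, cmpCos, arcosh_eq_real_arcosh, cosh_sub]
  congr 1
  field_simp
  linear_combination sinh a * sinh b * cosh_sq s

lemma cmpDist_collinear {a s : ℝ} (hs : 0 < s) (hsa : s ≤ a) : cmpDist a s (a - s) s s = 0 := by
  rw [cmpDist_self_eq (sinh_pos_iff.2 (hs.trans_le hsa)).ne' (sinh_pos_iff.2 hs).ne']
  simp

lemma monotone_arcosh_one_add_four_mul_exp :
    Monotone fun t => Real.arcosh (1 + 4 * exp t) := fun a b hab =>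
  (Real.arcosh_le_arcosh (by positivity) (by positivity)).2 (by gcongr)

lemma tendsto_arcosh_one_add_four_mul_exp_atBot :
    Tendsto (fun t => Real.arcosh (1 + 4 * exp t)) atBot (𝓝 0) := by
  have hcont : ContinuousAt Real.arcosh 1 := by
    unfold Real.arcosh
    fun_prop (disch := norm_num)
  have harg : Tendsto (fun t => 1 + 4 * exp t) atBot (𝓝 1) := by
    simpa using (tendsto_exp_atBot.const_mul 4).const_add 1
  rw [← Real.arcosh_zero]
  exact hcont.tendsto.comp harg

def gromovProduct {Y : Type*} [MetricSpace Y] (x y z : Y) : ℝ :=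
  (dist x y + dist x z - dist y z) / 2

lemma gromovProduct_comm {Y : Type*} [MetricSpace Y] (x y z : Y) :
    gromovProduct x y z = gromovProduct x z y := by
  rw [gromovProduct, gromovProduct, dist_comm y z, add_comm (dist x y)]

lemma gromovProduct_le_dist_left {Y : Type*} [MetricSpace Y] (x y z : Y) :
    gromovProduct x y z ≤ dist x y := by
  rw [gromovProduct]
  linarith [dist_triangle x y z]

namespace GeodesicStructure

variable {Y : Type*} [MetricSpace Y] (G : GeodesicStructure Y)

lemma dist_geo_left (x y : Y) {s : ℝ} (hs0 : 0 ≤ s) (hs : s ≤ dist x y) :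
    dist x (G.geo x y s) = s := by
  have h := G.geo_isom x y 0 ⟨le_rfl, dist_nonneg⟩ s ⟨hs0, hs⟩
  rwa [G.geo_zero, zero_sub, abs_neg, abs_of_nonneg hs0] at h

lemma dist_geo_right (x y : Y) {s : ℝ} (hs0 : 0 ≤ s) (hs : s ≤ dist x y) :
    dist (G.geo x y s) y = dist x y - s := by
  have h := G.geo_isom x y s ⟨hs0, hs⟩ (dist x y) ⟨dist_nonneg, le_rfl⟩
  rwa [G.geo_end, abs_sub_comm, abs_of_nonneg (sub_nonneg.2 hs)] at h

namespace IsCATNegOne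

variable {G}

lemma geo_dist_eq_of_dist_add_dist_eq (hG : G.IsCATNegOne) {x y m : Y}
    (h : dist x m + dist m y = dist x y) : G.geo x y (dist x m) = m := by
  rcases (dist_nonneg : 0 ≤ dist x m).eq_or_lt with h0 | hpos
  · rw [← h0, G.geo_zero, ← dist_le_zero, ← h0]
  have hle : dist x m ≤ dist x y := by linarith [dist_nonneg (x := m) (y := y)]
  have hym : dist y m = dist x y - dist x m := by rw [dist_comm]; linarith
  have hcat := hG x y m (dist x m) ⟨hpos.le, hle⟩ (dist x m) ⟨hpos.le, le_rfl⟩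
  rw [G.geo_end, hym, cmpDist_collinear hpos hle] at hcat
  exact dist_le_zero.1 hcat

lemma geo_eq_geo_swap (hG : G.IsCATNegOne) (x y : Y) {s : ℝ} (hs0 : 0 ≤ s)
    (hs : s ≤ dist x y) : G.geo x y s = G.geo y x (dist x y - s) := by
  have hs0' : 0 ≤ dist x y - s := sub_nonneg.2 hs
  have hs' : dist x y - s ≤ dist y x := by rw [dist_comm]; linarith
  have hxm : dist x (G.geo y x (dist x y - s)) = s := by
    rw [dist_comm, G.dist_geo_right y x hs0' hs', dist_comm]; ring
  have hmy : dist (G.geo y x (dist x y - s)) y = dist x y - s := by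
    rw [dist_comm, G.dist_geo_left y x hs0' hs']
  have h := hG.geo_dist_eq_of_dist_add_dist_eq (x := x) (y := y) (m := G.geo y x (dist x y - s))
    (by rw [hxm, hmy]; ring)
  rwa [hxm] at h

lemma dist_geo_geo_le (hG : G.IsCATNegOne) (v a b : Y) {s : ℝ} (hs0 : 0 ≤ s)
    (hsa : s ≤ dist v a) (hsb : s ≤ dist v b) (ha : 1 ≤ dist v a) (hb : 1 ≤ dist v b) :
    dist (G.geo v a s) (G.geo v b s) ≤
      Real.arcosh (1 + 4 * exp (2 * s - 2 * gromovProduct v a b)) := by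
  set A := dist v a
  set B := dist v b
  set c := dist a b
  have hA := exp_div_four_le_sinh ha
  have hB := exp_div_four_le_sinh hb
  have hsinh : 0 < sinh A * sinh B := mul_pos (by linarith [exp_pos A]) (by linarith [exp_pos B])
  have hAB : |A - B| ≤ c := by
    simpa only [A, B, dist_comm v] using abs_dist_sub_le a b v
  have hcosh : cosh (A - B) ≤ cosh c := cosh_le_cosh.2 (by rwa [abs_of_nonneg dist_nonneg])
  have hcosh_c : cosh c ≤ exp c := by
    rw [cosh_eq]; linarith [exp_le_exp.2 (by linarith [dist_nonneg (x := a) (y := b)] : -c ≤ c)]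
  have hsinh_s : sinh s ^ 2 ≤ (exp s / 2) ^ 2 :=
    pow_le_pow_left₀ (sinh_nonneg_iff.2 hs0) (sinh_le_exp_div_two s) 2
  have hexp : (exp s / 2) ^ 2 * exp c =
      4 * exp (2 * s - 2 * gromovProduct v a b) * (exp A / 4 * (exp B / 4)) := by
    have h : exp (2 * s - 2 * gromovProduct v a b) * exp A * exp B = exp s ^ 2 * exp c := by
      have hgp : gromovProduct v a b = (A + B - c) / 2 := rfl
      rw [← exp_add, ← exp_add, sq, ← exp_add, ← exp_add, hgp]
      ring_nf
    linear_combination (-1 / 4 : ℝ) * h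
  have hu : sinh s ^ 2 * (cosh c - cosh (A - B)) / (sinh A * sinh B) ≤
      4 * exp (2 * s - 2 * gromovProduct v a b) := by
    rw [div_le_iff₀ hsinh]
    calc sinh s ^ 2 * (cosh c - cosh (A - B))
        ≤ (exp s / 2) ^ 2 * exp c :=
          mul_le_mul hsinh_s (by linarith [one_le_cosh (A - B)]) (sub_nonneg.2 hcosh)
            (by positivity)
      _ = 4 * exp (2 * s - 2 * gromovProduct v a b) * (exp A / 4 * (exp B / 4)) := hexp
      _ ≤ 4 * exp (2 * s - 2 * gromovProduct v a b) * (sinh A * sinh B) := by gcongr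
  calc dist (G.geo v a s) (G.geo v b s) ≤ cmpDist A B c s s := hG v a b s ⟨hs0, hsa⟩ s ⟨hs0, hsb⟩
    _ = Real.arcosh (1 + sinh s ^ 2 * (cosh c - cosh (A - B)) / (sinh A * sinh B)) :=
        cmpDist_self_eq (by positivity) (by positivity)
    _ ≤ Real.arcosh (1 + 4 * exp (2 * s - 2 * gromovProduct v a b)) :=
        (Real.arcosh_le_arcosh (by positivity) (by positivity)).2 (by linarith)

/-- The upper bound is the triangle inequality through `G.geo x0 y s`; for the lower bound this
point fellow-travels, from `y`, the point at the same distance from `y` on `[y, x]`. -/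
lemma abs_horoemb_sub_dist_geo_le (hG : G.IsCATNegOne) (x0 x y : Y) {s : ℝ}
    (hxs : dist x0 x ≤ s) (hsy : s ≤ dist x0 y) (hxy : dist x0 x + 1 ≤ dist x0 y) :
    |horoemb x0 y x - (dist x (G.geo x0 y s) - s)| ≤
      Real.arcosh (1 + 4 * exp (2 * dist x0 x - 2 * s)) := by
  have hs0 : 0 ≤ s := dist_nonneg.trans hxs
  set u := dist x0 y - s with hu
  have hu0 : 0 ≤ u := sub_nonneg.2 hsy
  have htri := dist_triangle x0 x y
  have hx0 := dist_nonneg (x := x0) (y := x)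
  have hux : u ≤ dist y x := by rw [dist_comm]; linarith
  have hm : G.geo x0 y s = G.geo y x0 u := hG.geo_eq_geo_swap x0 y hs0 hsy
  have hmy : dist (G.geo x0 y s) y = u := G.dist_geo_right x0 y hs0 hsy
  have hxm' : dist (G.geo y x u) x = dist x y - u := by
    rw [G.dist_geo_right y x hu0 hux, dist_comm]
  have hmm' : dist (G.geo x0 y s) (G.geo y x u) ≤
      Real.arcosh (1 + 4 * exp (2 * dist x0 x - 2 * s)) := by
    rw [hm]
    refine (hG.dist_geo_geo_le y x0 x hu0 (by rw [dist_comm]; linarith) hux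
      (by rw [dist_comm]; linarith) (by rw [dist_comm]; linarith)).trans
      (monotone_arcosh_one_add_four_mul_exp ?_)
    simp only [gromovProduct, u]
    rw [dist_comm y x0, dist_comm y x]
    linarith
  rw [horoemb, abs_le]
  constructor
  · linarith [dist_triangle x (G.geo y x u) (G.geo x0 y s), dist_comm x (G.geo y x u),
      dist_comm (G.geo y x u) (G.geo x0 y s)]
  · linarith [dist_triangle x (G.geo x0 y s) y,
      dist_nonneg (x := G.geo x0 y s) (y := G.geo y x u)]

lemma abs_horoemb_sub_horoemb_le (hG : G.IsCATNegOne) (x0 x y z : Y) {L : ℝ} (hL : 1 ≤ L)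
    (hyz : dist x0 x + 2 * L ≤ gromovProduct x0 y z) :
    |horoemb x0 y x - horoemb x0 z x| ≤ 3 * Real.arcosh (1 + 4 * exp (-(2 * L))) := by
  have hy : dist x0 x + 2 * L ≤ dist x0 y := hyz.trans (gromovProduct_le_dist_left x0 y z)
  have hz : dist x0 x + 2 * L ≤ dist x0 z := by
    rw [gromovProduct_comm] at hyz
    exact hyz.trans (gromovProduct_le_dist_left x0 z y)
  set s := dist x0 x + L
  have hs : 2 * dist x0 x - 2 * s = -(2 * L) := by ring
  have h0 : 0 ≤ s := by positivity
  have hfy := hG.abs_horoemb_sub_dist_geo_le x0 x y (s := s) (by linarith) (by linarith)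
    (by linarith)
  have hfz := hG.abs_horoemb_sub_dist_geo_le x0 x z (s := s) (by linarith) (by linarith)
    (by linarith)
  rw [hs] at hfy hfz
  have hyz' : dist (G.geo x0 y s) (G.geo x0 z s) ≤ Real.arcosh (1 + 4 * exp (-(2 * L))) :=
    (hG.dist_geo_geo_le x0 y z h0 (by linarith) (by linarith) (by linarith)
      (by linarith)).trans (monotone_arcosh_one_add_four_mul_exp (by linarith))
  have hx := abs_dist_sub_le (G.geo x0 y s) (G.geo x0 z s) x
  rw [dist_comm (G.geo x0 y s) x, dist_comm (G.geo x0 z s) x] at hx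
  rw [abs_le] at hfy hfz hx ⊢
  constructor <;> linarith [hfy.1, hfy.2, hfz.1, hfz.2, hx.1, hx.2]

lemma exists_abs_horoemb_sub_lt (hG : G.IsCATNegOne) (x0 x : Y) {ε : ℝ} (hε : 0 < ε) :
    ∃ R, ∀ y z, R ≤ gromovProduct x0 y z → |horoemb x0 y x - horoemb x0 z x| < ε := by
  have hlim : Tendsto (fun L : ℝ => 3 * Real.arcosh (1 + 4 * exp (-(2 * L)))) atTop (𝓝 0) := by
    simpa using (tendsto_arcosh_one_add_four_mul_exp_atBot.comp
      (tendsto_neg_atTop_atBot.comp (tendsto_id.const_mul_atTop two_pos))).const_mul 3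
  obtain ⟨L, hLε, hL⟩ := ((hlim.eventually (gt_mem_nhds hε)).and (eventually_ge_atTop 1)).exists
  exact ⟨dist x0 x + 2 * L, fun y z hyz =>
    (hG.abs_horoemb_sub_horoemb_le x0 x y z hL hyz).trans_lt hLε⟩

/-- Approximate `f` by some `horoemb x0 w`: the bound on `f (z n)` makes the Gromov product
`(z n | w)_{x₀} = (d(x₀, z n) - horoemb x0 w (z n)) / 2` large. -/
lemma tendsto_horoemb_of_le (hG : G.IsCATNegOne) {x0 : Y} {f : Y → ℝ}
    (hf : f ∈ closure (range (horoemb x0))) {ι : Type*} {l : Filter ι} {z : ι → Y}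
    (hz : Tendsto (fun n => dist x0 (z n)) l atTop) {M : ℝ} (hM : ∀ᶠ n in l, f (z n) ≤ M) :
    Tendsto (fun n => horoemb x0 (z n)) l (𝓝 f) := by
  refine tendsto_pi_nhds.2 fun x => Metric.tendsto_nhds.2 fun ε hε => ?_
  obtain ⟨R, hR⟩ := hG.exists_abs_horoemb_sub_lt x0 x (half_pos hε)
  filter_upwards [hM, hz.eventually_ge_atTop (2 * R + M + 1)] with n hfz hzn
  have hnear : ∀ᶠ g in 𝓝 f, dist (g x) (f x) < ε / 2 ∧ g (z n) < f (z n) + 1 :=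
    (Metric.tendsto_nhds.1 ((continuous_apply x).tendsto f) _ (half_pos hε)).and
      (((continuous_apply (z n)).tendsto f).eventually (gt_mem_nhds (lt_add_one _)))
  obtain ⟨_, ⟨hwx, hwz⟩, w, rfl⟩ := mem_closure_iff_nhds.1 hf _ hnear
  have hgp : R ≤ gromovProduct x0 (z n) w := by
    simp only [horoemb] at hwz
    rw [gromovProduct]
    linarith
  rw [Real.dist_eq] at hwx ⊢
  linarith [abs_sub_le (horoemb x0 (z n) x) (horoemb x0 w x) (f x), hR _ _ hgp]

end IsCATNegOne

end GeodesicStructure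

lemma mem_limitSet_of_infinite {r : ℕ} {X : Fin r → Type*} [∀ i, MetricSpace (X i)]
    {G : ∀ i, GeodesicStructure (X i)} (hX : ∀ i, (G i).IsCATNegOne)
    {z0 : ∀ i, X i} {Γ : Subgroup (∀ i, X i ≃ᵢ X i)}
    (hdiv : ∀ u : ℕ → Γ, Function.Injective u → ∀ (z : ∀ i, X i) (i : Fin r),
      Tendsto (fun n => dist ((u n : ∀ i, X i ≃ᵢ X i) i (z i)) (z i)) atTop atTop)
    (ξ : BdryZ z0) (C : Fin r → ℝ)
    (hS : {g : Γ | ∀ i, (ξ i : X i → ℝ) (((g : ∀ i, X i ≃ᵢ X i) i).symm (z0 i)) ≤ C i}.Infinite) :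
    ξ ∈ limitSet z0 Γ := by
  let u := hS.natEmbedding
  have hinj : Function.Injective fun n => (u n : Γ)⁻¹ :=
    inv_injective.comp (Subtype.val_injective.comp u.injective)
  refine ⟨fun n => (u n : Γ)⁻¹, fun i => (hX i).tendsto_horoemb_of_le (ξ i).2.1 ?_
    (Eventually.of_forall fun n => (u n).2 i)⟩
  simpa only [dist_comm] using hdiv _ hinj z0 i

lemma mem_range_of_mem_closure_range {α β : Type*} [TopologicalSpace β] [T1Space β]
    {f : α → β} {U : Set β} (hU : IsOpen U) (hfin : (f ⁻¹' U).Finite) {p : β} (hpU : p ∈ U)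
    (hp : p ∈ closure (range f)) : p ∈ range f := by
  have hcl : p ∈ closure (f '' (f ⁻¹' U)) := by
    rw [image_preimage_eq_inter_range]
    exact hU.inter_closure ⟨hpU, hp⟩
  rw [(hfin.image f).isClosed.closure_eq] at hcl
  exact image_subset_range f _ hcl

theorem orbit_closed_outside_limit_set_general
    {r : ℕ} {X : Fin r → Type*} [∀ i, MetricSpace (X i)]
    (G : ∀ i, GeodesicStructure (X i)) (hX : ∀ i, (G i).IsCATNegOne)
    (z0 : ∀ i, X i) (Γ : Subgroup (∀ i, X i ≃ᵢ X i))
    (htr : IsTransverse z0 Γ)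
    (ξ : HorFol z0) (hξ : ξ.1 ∉ limitSet z0 Γ) :
    IsClosed {p : HorFol z0 | ∃ g ∈ Γ, p = HAct z0 g ξ} := by
  have horbit : {p : HorFol z0 | ∃ g ∈ Γ, p = HAct z0 g ξ} =
      range fun g : Γ => HAct z0 g ξ := by
    ext p
    simp [eq_comm]
  rw [horbit, ← closure_subset_iff_isClosed]
  intro p hp
  -- only finitely many `g ∈ Γ` move `ξ` into the slab `∂Z × B(p.2, 1)`
  refine mem_range_of_mem_closure_range (U := Prod.snd ⁻¹' ball p.2 1)
    (isOpen_ball.preimage continuous_snd) ?_ (mem_ball_self one_pos) hp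
  refine not_infinite.1 fun hinf => hξ (mem_limitSet_of_infinite hX htr.2.1 ξ.1
    (fun i => p.2 i + 1 - ξ.2 i + (ξ.1 i : X i → ℝ) (z0 i)) (hinf.mono fun g hg i => ?_))
  have hgi := (dist_pi_lt_iff one_pos).1 hg i
  rw [Real.dist_eq] at hgi
  have hHAct : (HAct z0 g ξ).2 i = ξ.2 i + ((ξ.1 i : X i → ℝ) ((g.1 i).symm (z0 i)) -
      (ξ.1 i : X i → ℝ) (z0 i)) := rfl
  linarith [(abs_lt.1 hgi).2]

/-- **Closedness of orbits outside the limit set** (Proposition 4.8).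
Let `Z = X₁ × ⋯ × X_r` be a product of proper geodesic CAT(−1) spaces and
`Γ ≤ Isom(Z)` a non-elementary transverse subgroup.  Then for every
`(ξ, u) ∈ H = ∂Z × ℝʳ` with `ξ ∉ Λ(Γ)`, the orbit `Γ·(ξ, u)` is closed in `H`. -/
theorem orbit_closed_outside_limit_set
    {r : ℕ} {X : Fin r → Type*} [∀ i, MetricSpace (X i)] [∀ i, ProperSpace (X i)]
    (G : ∀ i, GeodesicStructure (X i)) (hX : ∀ i, (G i).IsCATNegOne)
    (z0 : ∀ i, X i) (Γ : Subgroup (∀ i, X i ≃ᵢ X i))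
    (htr : IsTransverse z0 Γ) (hne : IsNonElementary z0 Γ)
    (ξ : HorFol z0) (hξ : ξ.1 ∉ limitSet z0 Γ) :
    IsClosed {p : HorFol z0 | ∃ g ∈ Γ, p = HAct z0 g ξ} :=
  orbit_closed_outside_limit_set_general G hX z0 Γ htr ξ hξ

end
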